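/- arXiv:2411.17866 — 2 statements merged into one kernel-verified Lean document; each statement's English description precedes it below -/
import Mathlib

section
/- Let f: R^d → R be differentiable with L-Lipschitz gradient, x ∈ R^d, m ∈ R^d, and x' = x - η sign(m) (componentwise sign, η > 0). Then f(x') ≤ f(x) - η ||∇f(x)||_1 + (2η√d/τ) ||m - τ∇f(x)|| + η^2 d L / 2, for any τ > 0. -/
/-!
The step `x' - x = -η • sign m` is plugged into the descent lemma
`f y ≤ f x + ⟪∇f x, y - x⟫ + L/2 ‖y - x‖²`, with `‖sign m‖² ≤ d`. The first-order term is
`-η ⟪∇f x, sign m⟫`, and it differs from `-η ‖∇f x‖₁` only on coordinates where the signs of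
`m` and `∇f x` disagree; there `|m - τ ∇f x|` is at least `τ |∇f x|`, so the defect is at most
`(2/τ) ‖m - τ ∇f x‖₁ ≤ (2√d/τ) ‖m - τ ∇f x‖`.
-/

open scoped RealInnerProductSpace

section Descent

variable {E : Type*} [NormedAddCommGroup E] [InnerProductSpace ℝ E] [CompleteSpace E]
  {f : E → ℝ} {L : ℝ}

theorem hasDerivAt_comp_add_smul (hf : Differentiable ℝ f) (x v : E) (t : ℝ) :
    HasDerivAt (fun s : ℝ => f (x + s • v)) ⟪gradient f (x + t • v), v⟫ t := by
  have hline : HasDerivAt (fun s : ℝ => x + s • v) v t := by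
    simpa using ((hasDerivAt_id t).smul_const v).const_add x
  simpa [Function.comp_def] using
    (hf (x + t • v)).hasGradientAt.hasFDerivAt.comp_hasDerivAt t hline

theorem inner_gradient_add_smul_le (hlip : ∀ a b, ‖gradient f a - gradient f b‖ ≤ L * ‖a - b‖)
    (x v : E) {t : ℝ} (ht : 0 ≤ t) :
    ⟪gradient f (x + t • v), v⟫ ≤ ⟪gradient f x, v⟫ + L * ‖v‖ ^ 2 * t := by
  have hgap : ⟪gradient f (x + t • v) - gradient f x, v⟫ ≤ L * ‖v‖ ^ 2 * t :=
    calc ⟪gradient f (x + t • v) - gradient f x, v⟫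
        ≤ ‖gradient f (x + t • v) - gradient f x‖ * ‖v‖ := real_inner_le_norm _ _
      _ ≤ L * ‖x + t • v - x‖ * ‖v‖ := by gcongr; exact hlip _ _
      _ = L * ‖v‖ ^ 2 * t := by
        rw [add_sub_cancel_left, norm_smul, Real.norm_of_nonneg ht]; ring
  rw [inner_sub_left] at hgap
  linarith

theorem image_le_add_inner_gradient_add_sq (hf : Differentiable ℝ f)
    (hlip : ∀ a b, ‖gradient f a - gradient f b‖ ≤ L * ‖a - b‖) (x y : E) :
    f y ≤ f x + ⟪gradient f x, y - x⟫ + L / 2 * ‖y - x‖ ^ 2 := by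
  set v := y - x
  -- On `[0, 1]`, `t ↦ f (x + t • v)` stays below the quadratic whose derivative dominates its own.
  have hbound := image_le_of_deriv_right_le_deriv_boundary (a := 0) (b := 1)
    (f := fun t : ℝ => f (x + t • v))
    (B := fun t => f x + t * ⟪gradient f x, v⟫ + L / 2 * ‖v‖ ^ 2 * t ^ 2)
    (fun t _ => (hasDerivAt_comp_add_smul hf x v t).continuousAt.continuousWithinAt)
    (fun t _ => (hasDerivAt_comp_add_smul hf x v t).hasDerivWithinAt)
    (by simp) (by fun_prop)
    (fun t _ => (((hasDerivAt_id t).mul_const _).const_add _ |>.add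
      ((hasDerivAt_pow 2 t).const_mul _)).hasDerivWithinAt)
    (fun t ht => by
      have := inner_gradient_add_smul_le hlip x v ht.1
      simp only [Nat.cast_ofNat]; linarith)
    (Set.right_mem_Icc.2 zero_le_one)
  simpa [v] using hbound

end Descent

section Sign

variable {ι : Type*}

-- Where `sign a ≠ sign b` we have `|a - τ b| ≥ τ |b|`; elsewhere the left side vanishes.
theorem Real.mul_abs_sub_mul_sign_le (a b : ℝ) {τ : ℝ} (hτ : 0 < τ) :
    τ * (|b| - b * Real.sign a) ≤ 2 * |a - τ * b| := by
  have hle := le_abs_self (a - τ * b)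
  have hge := neg_abs_le (a - τ * b)
  rcases lt_trichotomy a 0 with ha | rfl | ha
  · rw [Real.sign_of_neg ha]
    rcases abs_cases b with ⟨hb1, hb2⟩ | ⟨hb1, hb2⟩ <;> nlinarith
  · rw [Real.sign_zero]
    rcases abs_cases b with ⟨hb1, hb2⟩ | ⟨hb1, hb2⟩ <;> nlinarith
  · rw [Real.sign_of_pos ha]
    rcases abs_cases b with ⟨hb1, hb2⟩ | ⟨hb1, hb2⟩ <;> nlinarith

noncomputable def EuclideanSpace.sign (m : EuclideanSpace ℝ ι) : EuclideanSpace ℝ ι :=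
  WithLp.toLp 2 fun i => Real.sign (m i)

@[simp]
theorem EuclideanSpace.sign_apply (m : EuclideanSpace ℝ ι) (i : ι) :
    EuclideanSpace.sign m i = Real.sign (m i) := rfl

variable [Fintype ι]

theorem EuclideanSpace.sum_abs_le_sqrt_card_mul_norm (w : EuclideanSpace ℝ ι) :
    ∑ i, |w i| ≤ √(Fintype.card ι) * ‖w‖ := by
  rw [← pow_le_pow_iff_left₀ (by positivity) (by positivity) two_ne_zero, mul_pow,
    Real.sq_sqrt (by positivity), EuclideanSpace.real_norm_sq_eq]
  simpa using sq_sum_le_card_mul_sum_sq (s := Finset.univ) (f := fun i => |w i|)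

theorem EuclideanSpace.norm_sign_sq_le (m : EuclideanSpace ℝ ι) :
    ‖EuclideanSpace.sign m‖ ^ 2 ≤ Fintype.card ι := by
  rw [EuclideanSpace.real_norm_sq_eq]
  calc ∑ i, Real.sign (m i) ^ 2 ≤ ∑ _i : ι, (1 : ℝ) := by
        gcongr with i
        rcases Real.sign_apply_eq (m i) with h | h | h <;> simp [h]
    _ = Fintype.card ι := by simp

theorem EuclideanSpace.sum_abs_sub_inner_sign_le (g m : EuclideanSpace ℝ ι) {τ : ℝ} (hτ : 0 < τ) :
    ∑ i, |g i| - ⟪g, EuclideanSpace.sign m⟫ ≤ 2 * √(Fintype.card ι) / τ * ‖m - τ • g‖ := by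
  have hcoord : τ * (∑ i, |g i| - ⟪g, EuclideanSpace.sign m⟫) ≤ 2 * ∑ i, |m i - τ * g i| := by
    simp only [PiLp.inner_apply, EuclideanSpace.sign_apply, RCLike.inner_apply, conj_trivial,
      ← Finset.sum_sub_distrib, Finset.mul_sum]
    refine Finset.sum_le_sum fun i _ => ?_
    simpa [mul_comm] using Real.mul_abs_sub_mul_sign_le (m i) (g i) hτ
  have hl1 := EuclideanSpace.sum_abs_le_sqrt_card_mul_norm (m - τ • g)
  simp only [PiLp.sub_apply, PiLp.smul_apply, smul_eq_mul] at hl1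
  rw [div_mul_eq_mul_div, le_div_iff₀ hτ]
  linarith

end Sign

/-- Let `f : ℝ^d → ℝ` be differentiable with `L`-Lipschitz gradient,
`x' = x - η • sign m` (componentwise sign, `η > 0`). Then for any `τ > 0`,
`f x' ≤ f x - η ‖∇f x‖₁ + (2η√d/τ) ‖m - τ ∇f x‖ + η² d L / 2`. -/
theorem stmt_8 (d : ℕ) (L η τ : ℝ) (hL : 0 ≤ L) (hη : 0 < η) (hτ : 0 < τ)
    (f : EuclideanSpace ℝ (Fin d) → ℝ) (hf : Differentiable ℝ f)
    (hlip : ∀ a b, ‖gradient f a - gradient f b‖ ≤ L * ‖a - b‖)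
    (x x' m : EuclideanSpace ℝ (Fin d))
    (hx' : ∀ j, x' j = x j - η * Real.sign (m j)) :
    f x' ≤ f x - η * (∑ j, |gradient f x j|)
      + (2 * η * Real.sqrt d / τ) * ‖m - τ • gradient f x‖ + η^2 * d * L / 2 := by
  have hstep : x' - x = -(η • EuclideanSpace.sign m) := by ext j; simp [hx']
  have hdescent := image_le_add_inner_gradient_add_sq hf hlip x x'
  rw [hstep, inner_neg_right, real_inner_smul_right, norm_neg, norm_smul,
    mul_pow, Real.norm_of_nonneg hη.le] at hdescent
  have hinner := mul_le_mul_of_nonneg_left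
    (EuclideanSpace.sum_abs_sub_inner_sign_le (gradient f x) m hτ) hη.le
  have hnorm : L / 2 * (η ^ 2 * ‖EuclideanSpace.sign m‖ ^ 2) ≤ L / 2 * (η ^ 2 * d) := by
    gcongr
    simpa using EuclideanSpace.norm_sign_sq_le m
  simp only [Fintype.card_fin] at hinner
  linear_combination hdescent + hinner + hnorm
end

section
/- Let f: R^d → R have L-Lipschitz gradient and be bounded below by f_*. Consider iterates x_{t+1} = x_t - η sign(m_{t+1}) with m_{t+1} = β m_t + (1-β) g_t, where ||m_{t+1} - τ∇f(x_t)|| ≤ ε_t for all t. Then (1/T) Σ_{t=0}^{T-1} ||∇f(x_t)||_1 ≤ (f(x_0)-f_*)/(ηT) + (2√d/(τT)) Σ_{t=0}^{T-1} ε_t + η d L / 2. -/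
/-!
Each step moves every coordinate by `η` against the sign of `m (t+1)`. The descent lemma for a
function with `L`-Lipschitz gradient bounds the gain by `η ⟪∇f x, sign m⟫ - η² d L / 2`, and
`⟪∇f x, sign m⟫` falls short of `‖∇f x‖₁` by at most `(2√d/τ) ‖m - τ ∇f x‖`: a coordinate loses
only where the signs of `mᵢ` and `τ ∂ᵢf` disagree, and there `|τ ∂ᵢf| ≤ |mᵢ - τ ∂ᵢf|`.
Telescoping over `t < T` and using `f ≥ f⋆` gives the bound.
-/

open Finset
open scoped InnerProductSpace

theorem Real.abs_sub_mul_sign_le (b c : ℝ) : |b| - b * Real.sign c ≤ 2 * |b - c| := by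
  rcases lt_trichotomy c 0 with hc | rfl | hc
  · rw [Real.sign_of_neg hc]
    cases abs_cases b <;> cases abs_cases (b - c) <;> linarith
  · rw [Real.sign_zero, sub_zero]
    cases abs_cases b <;> linarith
  · rw [Real.sign_of_pos hc]
    cases abs_cases b <;> cases abs_cases (b - c) <;> linarith

namespace EuclideanSpace

variable {ι : Type*} [Fintype ι]

theorem sum_abs_le_sqrt_card_mul_norm_s12 (u : EuclideanSpace ℝ ι) :
    ∑ i, |u i| ≤ √(Fintype.card ι) * ‖u‖ := by
  simpa [EuclideanSpace.norm_eq] using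
    Real.sum_mul_le_sqrt_mul_sqrt univ (fun _ => (1 : ℝ)) (fun i => |u i|)

noncomputable def signVec (v : EuclideanSpace ℝ ι) : EuclideanSpace ℝ ι :=
  WithLp.toLp 2 fun i => Real.sign (v i)

theorem inner_signVec (u v : EuclideanSpace ℝ ι) :
    ⟪u, signVec v⟫_ℝ = ∑ i, u i * Real.sign (v i) := by
  simp [signVec, PiLp.inner_apply, mul_comm]

theorem norm_signVec_sq_le (v : EuclideanSpace ℝ ι) :
    ‖signVec v‖ ^ 2 ≤ Fintype.card ι := by
  rw [EuclideanSpace.norm_sq_eq]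
  calc ∑ i, ‖Real.sign (v i)‖ ^ 2 ≤ ∑ _i : ι, (1 : ℝ) := by
        gcongr with i
        rcases Real.sign_apply_eq (v i) with h | h | h <;> simp [h]
    _ = Fintype.card ι := by simp

theorem sum_abs_sub_inner_signVec_le (u v : EuclideanSpace ℝ ι) :
    ∑ i, |u i| - ⟪u, signVec v⟫_ℝ ≤ 2 * √(Fintype.card ι) * ‖u - v‖ := by
  calc ∑ i, |u i| - ⟪u, signVec v⟫_ℝ = ∑ i, (|u i| - u i * Real.sign (v i)) := by
        rw [inner_signVec, sum_sub_distrib]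
    _ ≤ ∑ i, 2 * |(u - v) i| := by
        gcongr with i
        exact Real.abs_sub_mul_sign_le _ _
    _ ≤ 2 * √(Fintype.card ι) * ‖u - v‖ := by
        rw [← mul_sum, mul_assoc]
        gcongr
        exact sum_abs_le_sqrt_card_mul_norm_s12 _

end EuclideanSpace

theorem le_add_inner_gradient_add_of_lipschitz {E : Type*} [NormedAddCommGroup E]
    [InnerProductSpace ℝ E] [CompleteSpace E] {f : E → ℝ} {L : ℝ} (hf : Differentiable ℝ f)
    (hlip : ∀ a b, ‖gradient f a - gradient f b‖ ≤ L * ‖a - b‖) (a b : E) :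
    f b ≤ f a + ⟪gradient f a, b - a⟫_ℝ + L / 2 * ‖b - a‖ ^ 2 := by
  set v := b - a
  -- `φ` is antitone on `[0, 1]`: its derivative is `⟪∇f (a + t v) - ∇f a, v⟫ - L t ‖v‖² ≤ 0`.
  let φ : ℝ → ℝ := fun t => f (a + t • v) - t * ⟪gradient f a, v⟫_ℝ - L / 2 * ‖v‖ ^ 2 * t ^ 2
  have hφ : ∀ t, HasDerivAt φ
      (⟪gradient f (a + t • v), v⟫_ℝ - ⟪gradient f a, v⟫_ℝ - L / 2 * ‖v‖ ^ 2 * (2 * t)) t := by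
    intro t
    have hline : HasDerivAt (fun s : ℝ => a + s • v) v t := by
      simpa using ((hasDerivAt_id t).smul_const v).const_add a
    have hfline := (hf (a + t • v)).hasGradientAt.hasFDerivAt.comp_hasDerivAt t hline
    rw [InnerProductSpace.toDual_apply_apply] at hfline
    exact ((hfline.sub ((hasDerivAt_id t).mul_const _)).sub
      ((hasDerivAt_pow 2 t).const_mul _)).congr_deriv (by simp)
  have hanti : AntitoneOn φ (Set.Icc 0 1) := by
    refine antitoneOn_of_hasDerivWithinAt_nonpos (convex_Icc 0 1)
      (fun t _ => (hφ t).continuousAt.continuousWithinAt)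
      (fun t _ => (hφ t).hasDerivWithinAt) fun t ht => ?_
    rw [interior_Icc] at ht
    have hcs : ⟪gradient f (a + t • v) - gradient f a, v⟫_ℝ ≤ L * t * ‖v‖ ^ 2 :=
      calc ⟪gradient f (a + t • v) - gradient f a, v⟫_ℝ
          ≤ ‖gradient f (a + t • v) - gradient f a‖ * ‖v‖ := real_inner_le_norm _ _
        _ ≤ L * ‖t • v‖ * ‖v‖ := by gcongr; simpa using hlip (a + t • v) a
        _ = L * t * ‖v‖ ^ 2 := by rw [norm_smul, Real.norm_of_nonneg ht.1.le]; ring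
    rw [inner_sub_left] at hcs
    linarith
  have h01 := hanti (by simp) (by simp) zero_le_one
  simp only [φ, zero_smul, add_zero, one_smul, add_sub_cancel, v] at h01
  linarith

theorem image_sub_smul_signVec_le {ι : Type*} [Fintype ι] {f : EuclideanSpace ℝ ι → ℝ}
    {L η τ : ℝ} (hL : 0 ≤ L) (hη : 0 ≤ η) (hτ : 0 < τ) (hf : Differentiable ℝ f)
    (hlip : ∀ a b, ‖gradient f a - gradient f b‖ ≤ L * ‖a - b‖) (x M : EuclideanSpace ℝ ι) :
    f (x - η • M.signVec) ≤ f x - η * ∑ i, |gradient f x i|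
      + 2 * η * √(Fintype.card ι) / τ * ‖M - τ • gradient f x‖
      + η ^ 2 * Fintype.card ι * L / 2 := by
  have hdesc := le_add_inner_gradient_add_of_lipschitz hf hlip x (x - η • M.signVec)
  rw [sub_sub_cancel_left, inner_neg_right, inner_smul_right, norm_neg, norm_smul,
    Real.norm_of_nonneg hη, mul_pow] at hdesc
  have hsign : ∑ i, |gradient f x i| - ⟪gradient f x, M.signVec⟫_ℝ
      ≤ 2 * √(Fintype.card ι) / τ * ‖M - τ • gradient f x‖ := by
    have h := EuclideanSpace.sum_abs_sub_inner_signVec_le (τ • gradient f x) M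
    simp only [PiLp.smul_apply, smul_eq_mul, abs_mul, abs_of_pos hτ, inner_smul_left,
      RCLike.conj_to_real, ← mul_sum, ← mul_sub] at h
    rw [div_mul_eq_mul_div, le_div_iff₀ hτ, ← norm_sub_rev]
    linarith
  have hnorm : L / 2 * (η ^ 2 * ‖M.signVec‖ ^ 2) ≤ L / 2 * (η ^ 2 * Fintype.card ι) := by
    gcongr; exact M.norm_signVec_sq_le
  have := mul_le_mul_of_nonneg_left hsign hη
  linear_combination hdesc + this + hnorm

theorem mul_sum_range_le_of_le_sub_mul_add {a s c : ℕ → ℝ} {η lb : ℝ}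
    (hstep : ∀ t, a (t + 1) ≤ a t - η * s t + c t) (hlb : ∀ t, lb ≤ a t) (T : ℕ) :
    η * ∑ t ∈ range T, s t ≤ a 0 - lb + ∑ t ∈ range T, c t := by
  have htel : η * ∑ t ∈ range T, s t ≤ ∑ t ∈ range T, (a t - a (t + 1) + c t) := by
    rw [mul_sum]
    gcongr with t
    linarith [hstep t]
  rw [sum_add_distrib, sum_range_sub'] at htel
  linarith [hlb T]

theorem stmt_12_general (d T : ℕ) (hT : 1 ≤ T) (L η τ fstar : ℝ)
    (hL : 0 ≤ L) (hη : 0 < η) (hτ : 0 < τ)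
    (f : EuclideanSpace ℝ (Fin d) → ℝ) (hf : Differentiable ℝ f)
    (hlip : ∀ a b, ‖gradient f a - gradient f b‖ ≤ L * ‖a - b‖)
    (hlb : ∀ z, fstar ≤ f z)
    (x m : ℕ → EuclideanSpace ℝ (Fin d)) (ε : ℕ → ℝ)
    (hx : ∀ t j, x (t+1) j = x t j - η * Real.sign (m (t+1) j))
    (herr : ∀ t, ‖m (t+1) - τ • gradient f (x t)‖ ≤ ε t) :
    (1/(T:ℝ)) * ∑ t ∈ Finset.range T, ∑ j, |gradient f (x t) j|
      ≤ (f (x 0) - fstar) / (η * T)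
        + (2 * Real.sqrt d / (τ * T)) * ∑ t ∈ Finset.range T, ε t
        + η * d * L / 2 := by
  have hstep : ∀ t, f (x (t + 1)) ≤ f (x t) - η * ∑ j, |gradient f (x t) j|
      + (2 * η * √d / τ * ε t + η ^ 2 * d * L / 2) := by
    intro t
    have hxt : x (t + 1) = x t - η • (m (t + 1)).signVec := by
      ext j; simp [hx, EuclideanSpace.signVec]
    have h := image_sub_smul_signVec_le hL hη.le hτ hf hlip (x t) (m (t + 1))
    rw [Fintype.card_fin, ← hxt] at h
    have : 2 * η * √d / τ * ‖m (t + 1) - τ • gradient f (x t)‖ ≤ 2 * η * √d / τ * ε t := by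
      gcongr; exact herr t
    linarith
  have hsum := mul_sum_range_le_of_le_sub_mul_add hstep (fun t => hlb (x t)) T
  rw [sum_add_distrib, ← mul_sum, sum_const, card_range, nsmul_eq_mul] at hsum
  have hT' : (0 : ℝ) < T := by exact_mod_cast hT
  calc (1 / (T : ℝ)) * ∑ t ∈ range T, ∑ j, |gradient f (x t) j|
      = (η * ∑ t ∈ range T, ∑ j, |gradient f (x t) j|) / (η * T) := by field_simp
    _ ≤ (f (x 0) - fstar + (2 * η * √d / τ * ∑ t ∈ range T, ε t + T * (η ^ 2 * d * L / 2)))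
          / (η * T) := by gcongr
    _ = _ := by field_simp; ring

/-- Let `f : ℝ^d → ℝ` have `L`-Lipschitz gradient and be bounded below by
`f⋆`. Consider iterates `x (t+1) = x t - η • sign (m (t+1))` with
`m (t+1) = β • m t + (1-β) • g t`, where `‖m (t+1) - τ • ∇f (x t)‖ ≤ ε t` for all `t`.
Then `(1/T) ∑_{t<T} ‖∇f (x t)‖₁ ≤ (f (x 0) - f⋆)/(ηT) + (2√d/(τT)) ∑_{t<T} ε t + η d L / 2`. -/
theorem stmt_12 (d T : ℕ) (hT : 1 ≤ T) (L η β τ fstar : ℝ)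
    (hL : 0 ≤ L) (hη : 0 < η) (hτ : 0 < τ) (hβ0 : 0 ≤ β) (hβ1 : β < 1)
    (f : EuclideanSpace ℝ (Fin d) → ℝ) (hf : Differentiable ℝ f)
    (hlip : ∀ a b, ‖gradient f a - gradient f b‖ ≤ L * ‖a - b‖)
    (hlb : ∀ z, fstar ≤ f z)
    (x m g : ℕ → EuclideanSpace ℝ (Fin d)) (ε : ℕ → ℝ)
    (hrec : ∀ t, m (t+1) = β • m t + (1-β) • g t)
    (hx : ∀ t j, x (t+1) j = x t j - η * Real.sign (m (t+1) j))
    (herr : ∀ t, ‖m (t+1) - τ • gradient f (x t)‖ ≤ ε t) :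
    (1/(T:ℝ)) * ∑ t ∈ Finset.range T, ∑ j, |gradient f (x t) j|
      ≤ (f (x 0) - fstar) / (η * T)
        + (2 * Real.sqrt d / (τ * T)) * ∑ t ∈ Finset.range T, ε t
        + η * d * L / 2 :=
  stmt_12_general d T hT L η τ fstar hL hη hτ f hf hlip hlb x m ε hx herr
end
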